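/- The plane cubic curve δ = {[y₀:y₁:y₂] ∈ ℙ²(ℂ) : 2y₀³ + 6y₀²y₁ + 5y₀y₁² + y₀y₁y₂ + 3y₁³ + 5y₁²y₂ + 6y₁y₂² + 2y₂³ = 0} is smooth; that is, for every (y₀,y₁,y₂) ∈ ℂ³ \ {0} at which the defining polynomial f vanishes, the gradient (∂f/∂y₀, ∂f/∂y₁, ∂f/∂y₂) is nonzero. -/

import Mathlib

/-!
At a singular point the three partials, which are quadrics, vanish simultaneously. Three
quadrics in three variables without a common projective zero span every quartic, so the middle
coordinate is killed by an explicit certificate for `y₁ ^ 4`; with `y₁ = 0` the first and last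
partials reduce to `6 y₀ ^ 2` and `6 y₂ ^ 2`.
-/

open MvPolynomial

noncomputable section

/-- The homogeneous cubic
f = 2y₀³ + 6y₀²y₁ + 5y₀y₁² + y₀y₁y₂ + 3y₁³ + 5y₁²y₂ + 6y₁y₂² + 2y₂³,
the defining polynomial of the discriminant curve δ ⊂ ℙ². -/
def fCubic : MvPolynomial (Fin 3) ℂ :=
  2 * X 0 ^ 3 + 6 * X 0 ^ 2 * X 1 + 5 * X 0 * X 1 ^ 2 + X 0 * X 1 * X 2 +
    3 * X 1 ^ 3 + 5 * X 1 ^ 2 * X 2 + 6 * X 1 * X 2 ^ 2 + 2 * X 2 ^ 3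

@[simp]
theorem MvPolynomial.pderiv_ofNat {R σ : Type*} [CommSemiring R] (i : σ) (n : ℕ) [n.AtLeastTwo] :
    pderiv i (ofNat(n) : MvPolynomial σ R) = 0 :=
  (pderiv i).map_natCast n

section Quadrics

variable {K : Type*} [Field K] [CharZero K]

theorem eq_zero_of_gradient_eq_zero {a b c : K}
    (h0 : 6 * a ^ 2 + 12 * a * b + 5 * b ^ 2 + b * c = 0)
    (h1 : 6 * a ^ 2 + 10 * a * b + a * c + 9 * b ^ 2 + 10 * b * c + 6 * c ^ 2 = 0)
    (h2 : a * b + 5 * b ^ 2 + 12 * b * c + 6 * c ^ 2 = 0) :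
    a = 0 ∧ b = 0 ∧ c = 0 := by
  have hb : b = 0 := by
    linear_combination (exp := 4)
      (-3426/9593 * a * b - 1798/9593 * a * c - 102269/172674 * b ^ 2 - 3098/9593 * b * c
        - 899/28779 * c ^ 2) * h0
      + (3426/9593 * a * b + 1798/9593 * a * c + 130321/172674 * b ^ 2
        + 3426/9593 * b * c) * h1
      + (-7496/28779 * a * b - 1798/9593 * a * c - 48887/86337 * b ^ 2
        - 60769/172674 * b * c) * h2
  subst hb
  refine ⟨?_, rfl, ?_⟩
  · exact pow_eq_zero_iff two_ne_zero |>.mp (by linear_combination h0 / 6)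
  · exact pow_eq_zero_iff two_ne_zero |>.mp (by linear_combination h2 / 6)

end Quadrics

theorem eval_pderiv_fCubic (y : Fin 3 → ℂ) (i : Fin 3) :
    eval y (pderiv i fCubic) =
      ![6 * y 0 ^ 2 + 12 * y 0 * y 1 + 5 * y 1 ^ 2 + y 1 * y 2,
        6 * y 0 ^ 2 + 10 * y 0 * y 1 + y 0 * y 2 + 9 * y 1 ^ 2 + 10 * y 1 * y 2 + 6 * y 2 ^ 2,
        y 0 * y 1 + 5 * y 1 ^ 2 + 12 * y 1 * y 2 + 6 * y 2 ^ 2] i := by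
  fin_cases i <;>
  simp only [fCubic, map_add, map_mul, map_pow, Derivation.leibniz, Derivation.leibniz_pow, pderiv_X,
    pderiv_ofNat, Pi.single_apply, Fin.isValue, Fin.reduceEq, ite_true, ite_false, smul_eq_mul,
    nsmul_eq_mul, eval_X, map_zero, map_one, map_ofNat, map_natCast, Fin.reduceFinMk,
    Matrix.cons_val_zero, Matrix.cons_val_one, Matrix.cons_val_two,
    Matrix.tail_cons, Matrix.head_cons] <;>
  ring

theorem stmt14_general (y : Fin 3 → ℂ) (hy : y ≠ 0) :
    ¬ ∀ i : Fin 3, eval y (pderiv i fCubic) = 0 := by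
  intro hgrad
  have hquad i := (eval_pderiv_fCubic y i).symm.trans (hgrad i)
  obtain ⟨h0, h1, h2⟩ := eq_zero_of_gradient_eq_zero (hquad 0) (hquad 1) (hquad 2)
  exact hy (funext fun i => by fin_cases i <;> assumption)

/-- the plane cubic curve δ = {f = 0} ⊂ ℙ²(ℂ) is smooth: at every nonzero
point of ℂ³ where f vanishes, the gradient (∂f/∂y₀, ∂f/∂y₁, ∂f/∂y₂) is nonzero. -/
theorem stmt14 (y : Fin 3 → ℂ) (hy : y ≠ 0) (hf : eval y fCubic = 0) :
    ¬ ∀ i : Fin 3, eval y (pderiv i fCubic) = 0 :=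
  stmt14_general y hy
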